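/- Let p be a prime, let A ∈ ℤ with gcd(A, p) = 1, and let k be a positive integer divisible by 3. Then S(A x³, p^k) = p^{2k/3}. -/

import Mathlib

/-!
Write `e_c(x) = exp(2πi x / c)`. For `c = N M` with `M ∣ 3N` and `M ∣ N²`, putting
`j = u + N v` gives `A j³ ≡ A u³ + N · 3A u² v (mod NM)`, so the sum over `v` is a complete
character sum mod `M`: it is `M` if `M ∣ 3A u²` and `0` otherwise. Taking `M = p` (or `M = 9`
when `p = 3`), only the multiples `u = p w` survive, and `e_{p³c}(A p³ w³) = e_c(A w³)`; this
gives `S(Ax³, p³c) = p² S(Ax³, c)`, and the theorem follows by induction on `k / 3`.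
-/

noncomputable section

namespace CubicAppendix

/-- `S(Ax³, c) := ∑_{j=0}^{c−1} exp(2πi A j³ / c)`. -/
def S (A : ℤ) (c : ℕ) : ℂ :=
  ∑ j ∈ Finset.range c,
    Complex.exp (2 * Real.pi * Complex.I * (A : ℂ) * (j : ℂ) ^ 3 / (c : ℂ))

open Finset Complex Real

lemma sum_range_mul_eq_sum_sum {M : Type*} [AddCommMonoid M] (f : ℕ → M) (a b : ℕ) :
    ∑ j ∈ range (a * b), f j = ∑ v ∈ range b, ∑ u ∈ range a, f (a * v + u) := by
  induction b with
  | zero => simp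
  | succ b ih => rw [mul_add_one, sum_range_add, ih, sum_range_succ]

lemma sum_range_mul_of_periodic {M : Type*} [AddCommMonoid M] {f : ℕ → M} {n : ℕ}
    (hf : Function.Periodic f n) (q : ℕ) :
    ∑ j ∈ range (n * q), f j = q • ∑ j ∈ range n, f j := by
  have hfv : ∀ v u, f (n * v + u) = f u := fun v u => by
    simpa [add_comm, mul_comm] using hf.nat_mul v u
  simp [sum_range_mul_eq_sum_sum, hfv]

lemma sum_range_mul_ite_dvd {M : Type*} [AddCommMonoid M] (g : ℕ → M) {p : ℕ} (hp : 0 < p)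
    (n : ℕ) :
    ∑ u ∈ range (p * n), (if p ∣ u then g u else 0) = ∑ w ∈ range n, g (p * w) := by
  rw [sum_range_mul_eq_sum_sum]
  refine sum_congr rfl fun w _ => ?_
  have hdvd : ∀ r ∈ range p, p ∣ p * w + r ↔ r = 0 := fun r hr => by
    rw [Nat.dvd_add_right (dvd_mul_right p w)]
    exact ⟨fun h => Nat.eq_zero_of_dvd_of_lt h (mem_range.mp hr), fun h => h ▸ dvd_zero p⟩
  rw [sum_congr rfl fun r hr => if_congr (hdvd r hr) rfl rfl]
  simp [hp]

def e (c : ℕ) (x : ℤ) : ℂ := exp (2 * π * I * x / c)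

lemma S_eq_sum_e (A : ℤ) (c : ℕ) : S A c = ∑ j ∈ range c, e c (A * j ^ 3) := by
  refine sum_congr rfl fun j _ => ?_
  simp only [e]
  push_cast
  ring_nf

lemma e_add (c : ℕ) (x y : ℤ) : e c (x + y) = e c x * e c y := by
  simp only [e, ← Complex.exp_add]
  push_cast
  ring_nf

lemma e_mul_nat (c : ℕ) (x : ℤ) (n : ℕ) : e c (x * n) = e c x ^ n := by
  simp only [e, ← Complex.exp_nat_mul]
  push_cast
  ring_nf

lemma e_natCast_mul (c : ℕ) (t : ℤ) : e c (c * t) = 1 := by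
  rcases eq_or_ne c 0 with rfl | hc
  · simp [e]
  · have hc' : (c : ℂ) ≠ 0 := Nat.cast_ne_zero.mpr hc
    simp only [e]
    push_cast
    rw [show 2 * π * I * (c * t) / c = t * (2 * π * I) by field_simp]
    exact exp_int_mul_two_pi_mul_I t

lemma e_congr {c : ℕ} {x y : ℤ} (h : x ≡ y [ZMOD c]) : e c x = e c y := by
  obtain ⟨t, ht⟩ := h.dvd
  rw [show y = x + c * t by omega, e_add, e_natCast_mul, mul_one]

lemma e_eq_one_iff {c : ℕ} (hc : c ≠ 0) (x : ℤ) : e c x = 1 ↔ (c : ℤ) ∣ x := by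
  refine ⟨fun h => ?_, fun ⟨t, ht⟩ => ht ▸ e_natCast_mul c t⟩
  obtain ⟨t, ht⟩ := Complex.exp_eq_one_iff.mp h
  have hc' : (c : ℂ) ≠ 0 := Nat.cast_ne_zero.mpr hc
  have : (x : ℂ) = (c * t : ℤ) := by
    push_cast
    field_simp at ht
    linear_combination ht
  exact ⟨t, Int.cast_injective this⟩

lemma e_mul_mul_left {d : ℕ} (hd : d ≠ 0) (c : ℕ) (x : ℤ) : e (d * c) (d * x) = e c x := by
  have hd' : (d : ℂ) ≠ 0 := Nat.cast_ne_zero.mpr hd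
  simp only [e]
  congr 1
  push_cast
  field_simp

lemma sum_range_e_mul (n : ℕ) (x : ℤ) :
    ∑ v ∈ range n, e n (x * v) = if (n : ℤ) ∣ x then (n : ℂ) else 0 := by
  rcases eq_or_ne n 0 with rfl | hn
  · simp
  simp only [e_mul_nat]
  split_ifs with hx
  · simp [(e_eq_one_iff hn x).mpr hx]
  · have hpow : e n x ^ n = 1 := by
      rw [← e_mul_nat, mul_comm, e_natCast_mul]
    rw [geom_sum_eq (mt (e_eq_one_iff hn x).mp hx), hpow, sub_self, zero_div]

lemma S_mul_eq_sum (A : ℤ) {N M : ℕ} (h3 : M ∣ 3 * N) (h2 : M ∣ N ^ 2) :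
    S A (N * M) = ∑ u ∈ range N,
      e (N * M) (A * u ^ 3) * if (M : ℤ) ∣ 3 * A * u ^ 2 then (M : ℂ) else 0 := by
  rw [S_eq_sum_e, sum_range_mul_eq_sum_sum, sum_comm]
  refine sum_congr rfl fun u hu => ?_
  have hN : N ≠ 0 := (Nat.zero_lt_of_lt (mem_range.mp hu)).ne'
  have hterm : ∀ v : ℕ, e (N * M) (A * ((N * v + u : ℕ) : ℤ) ^ 3)
      = e (N * M) (A * u ^ 3) * e M (3 * A * u ^ 2 * v) := fun v => by
    have h3' : ((N * M : ℕ) : ℤ) ∣ 3 * N ^ 2 := by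
      exact_mod_cast (mul_dvd_mul_left N h3).trans ⟨1, by ring⟩
    have h2' : ((N * M : ℕ) : ℤ) ∣ N ^ 3 := by
      exact_mod_cast (mul_dvd_mul_left N h2).trans ⟨1, by ring⟩
    have hcong : A * ((N * v + u : ℕ) : ℤ) ^ 3 ≡ A * u ^ 3 + N * (3 * A * u ^ 2 * v)
        [ZMOD (N * M : ℕ)] := by
      refine (Int.modEq_iff_dvd.mpr ?_).symm
      rw [show A * ((N * v + u : ℕ) : ℤ) ^ 3 - (A * u ^ 3 + N * (3 * A * u ^ 2 * v))
          = 3 * N ^ 2 * (A * u * v ^ 2) + N ^ 3 * (A * v ^ 3) by push_cast; ring]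
      exact dvd_add (h3'.mul_right _) (h2'.mul_right _)
    rw [e_congr hcong, e_add, e_mul_mul_left hN]
  simp only [hterm, ← mul_sum, sum_range_e_mul]

lemma S_cube_mul_eq_sum {p L M c : ℕ} (hp : 0 < p) (A : ℤ) (h3 : M ∣ 3 * (p * L))
    (h2 : M ∣ (p * L) ^ 2) (hcrit : ∀ u : ℕ, (M : ℤ) ∣ 3 * A * u ^ 2 ↔ p ∣ u)
    (hc : p * L * M = p ^ 3 * c) :
    S A (p ^ 3 * c) = M * ∑ w ∈ range L, e c (A * w ^ 3) := by
  rw [← hc, S_mul_eq_sum A h3 h2]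
  simp only [hcrit, mul_ite, mul_zero]
  rw [sum_range_mul_ite_dvd _ hp, mul_sum, hc]
  refine sum_congr rfl fun w _ => ?_
  rw [mul_comm, ← e_mul_mul_left (pow_ne_zero 3 hp.ne') c]
  push_cast
  ring_nf

lemma natCast_dvd_mul_sq_iff {p : ℕ} (hp : p.Prime) {A : ℤ} (hA : Int.gcd A p = 1) (u : ℕ) :
    (p : ℤ) ∣ A * u ^ 2 ↔ p ∣ u := by
  have hcop : IsCoprime (p : ℤ) A := (Int.isCoprime_iff_gcd_eq_one.mpr hA).symm
  rw [← Int.natCast_dvd_natCast]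
  exact ⟨fun h => (Nat.prime_iff_prime_int.mp hp).dvd_of_dvd_pow (hcop.dvd_of_dvd_mul_left h),
    fun h => (dvd_pow h two_ne_zero).mul_left A⟩

lemma S_prime_cube_mul {p : ℕ} (hp : p.Prime) {A : ℤ} (hA : Int.gcd A p = 1) (c : ℕ) :
    S A (p ^ 3 * c) = p ^ 2 * S A c := by
  by_cases hp3 : p = 3
  · subst hp3
    have hcrit : ∀ u : ℕ, ((9 : ℕ) : ℤ) ∣ 3 * A * u ^ 2 ↔ 3 ∣ u := fun u => by
      rw [← natCast_dvd_mul_sq_iff hp hA, mul_assoc, show ((9 : ℕ) : ℤ) = 3 * 3 by norm_num,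
        mul_dvd_mul_iff_left three_ne_zero]
      norm_num
    rw [S_cube_mul_eq_sum (L := c) (M := 9) hp.pos A ⟨c, by ring⟩ ⟨c ^ 2, by ring⟩ hcrit
      (by ring), S_eq_sum_e]
    norm_num
  · have hcrit : ∀ u : ℕ, (p : ℤ) ∣ 3 * A * u ^ 2 ↔ p ∣ u := fun u => by
      have h3 : ¬ (p : ℤ) ∣ 3 := fun h => hp3 <|
        (Nat.prime_dvd_prime_iff_eq hp Nat.prime_three).mp (by exact_mod_cast h)
      rw [mul_assoc, (Nat.prime_iff_prime_int.mp hp).dvd_mul, natCast_dvd_mul_sq_iff hp hA]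
      simp [h3]
    have hper : Function.Periodic (fun w : ℕ => e c (A * w ^ 3)) c := fun w => by
      simpa using e_congr ((Int.add_modEq_right.pow 3).mul_left A)
    rw [S_cube_mul_eq_sum (L := c * p) (M := p) hp.pos A ⟨3 * c * p, by ring⟩
      ⟨p ^ 3 * c ^ 2, by ring⟩ hcrit (by ring), sum_range_mul_of_periodic hper, S_eq_sum_e]
    simp only [nsmul_eq_mul]
    ring

lemma S_prime_pow_three_mul {p : ℕ} (hp : p.Prime) {A : ℤ} (hA : Int.gcd A p = 1) (m : ℕ) :
    S A (p ^ (3 * m)) = p ^ (2 * m) := by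
  induction m with
  | zero => simp [S]
  | succ m ih =>
    rw [mul_add_one, pow_add, mul_comm, S_prime_cube_mul hp hA, ih, ← pow_add, mul_add_one,
      add_comm]

theorem stmt15_general (p : ℕ) (hp : p.Prime) (A : ℤ) (hA : Int.gcd A p = 1)
    (k : ℕ) (h3 : k % 3 = 0) :
    S A (p ^ k) = (p : ℂ) ^ (2 * k / 3) := by
  obtain ⟨m, rfl⟩ : ∃ m, k = 3 * m := ⟨k / 3, by omega⟩
  rw [show 2 * (3 * m) / 3 = 2 * m by omega]
  exact S_prime_pow_three_mul hp hA m

theorem stmt15 (p : ℕ) (hp : p.Prime) (A : ℤ) (hA : Int.gcd A p = 1)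
    (k : ℕ) (hk : 0 < k) (h3 : k % 3 = 0) :
    S A (p ^ k) = (p : ℂ) ^ (2 * k / 3) :=
  stmt15_general p hp A hA k h3

end CubicAppendix
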